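/- arXiv:1805.08143 — 5 statements merged into one kernel-verified Lean document; each statement's English description precedes it below -/
import Mathlib

section
/- For a tree T on n vertices, the Wiener index of T equals the sum over all edges e of T of the product n(T1)·n(T2), where T1 and T2 are the two connected components of T − e. -/
open SimpleGraph Finset
open scoped Classical

/-- The Steiner distance of a vertex set `S` in `G`: the minimum number of edges of a
connected subgraph of `G` whose vertex set contains `S`. -/
noncomputable def steinerDist {V : Type*} (G : SimpleGraph V) (S : Set V) : ℕ :=
  sInf {m | ∃ H : G.Subgraph, H.Connected ∧ S ⊆ H.verts ∧ H.edgeSet.ncard = m}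

/-- The Steiner `k`-Wiener index: the sum of Steiner distances over all `k`-element
vertex subsets. -/
noncomputable def steinerWiener {V : Type*} [Fintype V] (G : SimpleGraph V) (k : ℕ) : ℕ :=
  ∑ S ∈ Finset.powersetCard k (Finset.univ : Finset V), steinerDist G (↑S : Set V)

/-- `v` is a cut vertex of `G`: `G` is connected but deleting `v` disconnects it. -/
def IsCutVertex {V : Type*} (G : SimpleGraph V) (v : V) : Prop :=
  G.Connected ∧ ¬ (G.induce {u | u ≠ v}).Connected

/-- The induced subgraph on `B` is connected and has no cut vertex. -/
def IsBiconnectedSet {V : Type*} (G : SimpleGraph V) (B : Set V) : Prop :=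
  (G.induce B).Connected ∧
    ∀ v ∈ B, (B \ {v}).Nonempty → (G.induce (B \ {v})).Connected

/-- `B` is a block of `G`: a maximal set inducing a connected subgraph without cut
vertex (with at least two vertices). -/
def IsBlock {V : Type*} (G : SimpleGraph V) (B : Set V) : Prop :=
  2 ≤ B.ncard ∧ IsBiconnectedSet G B ∧
    ∀ B' : Set V, B ⊆ B' → 2 ≤ B'.ncard → IsBiconnectedSet G B' → B' = B

/-- A block graph: a connected graph in which every block is a clique. -/
def IsBlockGraph {V : Type*} (G : SimpleGraph V) : Prop :=
  G.Connected ∧ ∀ B : Set V, IsBlock G B → G.IsClique B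


/-!
In a tree the unique path from `u` to `v` uses exactly the edges separating `u` from `v`, each
crossed once, from the side of `u` to the side of `v`. So `d(u, v)` counts the oriented edges
`(a, b)` with `u` on the side of `a` and `v` on the side of `b`. Exchanging the order of
summation, the oriented edge `(a, b)` is counted once for every pair in
(component of `a`) × (component of `b`) of `T - ab`.
-/

namespace SimpleGraph

variable {V : Type*} {G : SimpleGraph V}

/-- The edge `ab` separates `u` from `v`, with `u` on the side of `a` and `v` on that of `b`. -/
def Separates (G : SimpleGraph V) (a b u v : V) : Prop :=
  G.Adj a b ∧ (G.deleteEdges {s(a, b)}).Reachable a u ∧ (G.deleteEdges {s(a, b)}).Reachable b v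

lemma Walk.IsPath.separates_of_mem_darts {u v : V} {p : G.Walk u v} (hp : p.IsPath)
    {d : G.Dart} (hd : d ∈ p.darts) : G.Separates d.fst d.snd u v := by
  induction p with
  | nil => simp at hd
  | @cons u x v hux q ih =>
    rw [Walk.cons_isPath_iff] at hp
    rw [Walk.darts_cons, List.mem_cons] at hd
    rcases hd with rfl | hd
    · refine ⟨hux, .rfl, reachable_deleteEdges_iff_exists_walk.mpr ⟨q, fun hq => ?_⟩⟩
      exact hp.2 (q.fst_mem_support_of_mem_edges hq)
    · obtain ⟨had, hau, hbv⟩ := ih hp.1 hd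
      have hdq : s(d.fst, d.snd) ∈ q.edges := List.mem_map_of_mem hd
      have hne : s(u, x) ≠ s(d.fst, d.snd) := fun h =>
        hp.2 (q.fst_mem_support_of_mem_edges (h ▸ hdq))
      have hux' : (G.deleteEdges {s(d.fst, d.snd)}).Adj u x := by
        rw [deleteEdges_adj, Set.mem_singleton_iff]
        exact ⟨hux, hne⟩
      exact ⟨had, hau.trans hux'.reachable.symm, hbv⟩

lemma IsAcyclic.separates_iff_mem_darts (hG : G.IsAcyclic) {u v : V} {p : G.Walk u v}
    (hp : p.IsPath) {a b : V} : G.Separates a b u v ↔ (a, b) ∈ p.darts.map Dart.toProd := by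
  refine ⟨fun ⟨hab, hau, hbv⟩ => ?_, fun h => ?_⟩
  · have hbridge : ¬ (G.deleteEdges {s(a, b)}).Reachable a b :=
      isAcyclic_iff_forall_adj_isBridge.mp hG hab
    have hmem : s(a, b) ∈ p.edges := by
      by_contra hne
      have huv := reachable_deleteEdges_iff_exists_walk.mpr ⟨p, hne⟩
      exact hbridge (hau.trans (huv.trans hbv.symm))
    obtain ⟨d, hd, hde⟩ := List.mem_map.mp hmem
    rcases dart_edge_eq_mk'_iff'.mp hde with ⟨rfl, rfl⟩ | ⟨rfl, rfl⟩
    · exact List.mem_map_of_mem hd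
    · -- the path would cross the bridge from `b` to `a`, putting `u` on the side of `b`
      have hbu := (hp.separates_of_mem_darts hd).2.1
      rw [Sym2.eq_swap] at hbu
      exact (hbridge (hau.trans hbu.symm)).elim
  · obtain ⟨d, hd, hde⟩ := List.mem_map.mp h
    obtain ⟨rfl, rfl⟩ := Prod.ext_iff.mp hde
    exact hp.separates_of_mem_darts hd

lemma IsTree.dist_eq_ncard_setOf_separates (hG : G.IsTree) (u v : V) :
    G.dist u v = {e : V × V | G.Separates e.1 e.2 u v}.ncard := by
  obtain ⟨p, hp, hlen⟩ := hG.connected.exists_path_of_dist u v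
  have hnodup : (p.darts.map Dart.toProd).Nodup :=
    (p.darts_nodup_of_support_nodup hp.support_nodup).map Dart.toProd_injective
  have hset : {e : V × V | G.Separates e.1 e.2 u v} = ↑(p.darts.map Dart.toProd).toFinset := by
    ext; simp [hG.isAcyclic.separates_iff_mem_darts hp]
  rw [hset, Set.ncard_coe_finset, List.toFinset_card_of_nodup hnodup, List.length_map,
    Walk.length_darts, hlen]

lemma ncard_setOf_separates (a b : V) :
    {x : V × V | G.Separates a b x.1 x.2}.ncard =
      if G.Adj a b then
        {w | (G.deleteEdges {s(a, b)}).Reachable a w}.ncard *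
          {w | (G.deleteEdges {s(a, b)}).Reachable b w}.ncard
      else 0 := by
  split_ifs with hab
  · rw [← Set.ncard_prod]
    congr 1
    ext
    simp [Separates, hab]
  · simp [Separates, hab]

end SimpleGraph

lemma Fintype.sum_ncard_setOf_comm {α β : Type*} [Fintype α] [Fintype β]
    (r : α → β → Prop) :
    ∑ a, {b | r a b}.ncard = ∑ b, {a | r a b}.ncard := by
  simp only [Set.ncard_eq_toFinset_card', Set.toFinset_ofPred, Finset.card_filter]
  exact Finset.sum_comm

/-- Wiener's formula: for a tree, the sum of all distances equals the sum over edges of the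
product of the orders of the two components obtained by deleting the edge.
(Both sides are stated over ordered pairs, hence count each contribution twice.) -/
theorem stmt0 {V : Type*} [Fintype V] (T : SimpleGraph V) (hT : T.IsTree) :
    ∑ u : V, ∑ v : V, T.dist u v =
      ∑ u : V, ∑ v : V, if T.Adj u v then
        {w : V | (T.deleteEdges {s(u, v)}).Reachable u w}.ncard *
          {w : V | (T.deleteEdges {s(u, v)}).Reachable v w}.ncard
      else 0 := by
  calc ∑ u, ∑ v, T.dist u v
      = ∑ x : V × V, {e : V × V | T.Separates e.1 e.2 x.1 x.2}.ncard := by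
        rw [← Fintype.sum_prod_type']
        simp only [hT.dist_eq_ncard_setOf_separates]
    _ = ∑ e : V × V, {x : V × V | T.Separates e.1 e.2 x.1 x.2}.ncard :=
        Fintype.sum_ncard_setOf_comm _
    _ = _ := by
        rw [← Fintype.sum_prod_type']
        simp only [SimpleGraph.ncard_setOf_separates]
end

section
/- Let G be a connected block graph on n vertices isometrically embedded in a Hamming graph (Cartesian product of complete graphs) via coordinates indexed by its blocks B_1,…,B_t. Then for any set S of k vertices of G with 2 ≤ k ≤ n, the Steiner distance d(S) equals (∑_{i=1}^t ℓ_i(S)) − t, where ℓ_i(S) is the number of distinct values among the i-th coordinates of the vertices of S. -/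
open SimpleGraph Finset
open scoped Classical

/-!
For a connected subgraph `H` containing `S`, the `i`-th coordinate changes only along edges of
`H` inside block `i`, and a function taking `m` values on the vertices of a connected graph changes
along at least `m - 1` of its edges. Distinct blocks share no edge, so summing over the blocks
gives `∑ ℓᵢ(S) ≤ |E(H)| + t`.

Conversely, take `u, v ∈ S` at maximal distance and the first edge `ua` of a geodesic from `u`
to `v`; it lies in some block `i`. Then `a` agrees with `u` off coordinate `i`, agrees with `v` in
coordinate `i`, and no other vertex of `S` shares the `i`-th coordinate of `u`: such a vertex lies
in the component of `u` in `G` minus the edges of block `i`, so every path from it to `v` passes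
through `u`, and it would be farther from `v` than `u` is. Replacing `u` by `a` thus lowers
`∑ ℓᵢ` by at least one, and induction on `∑ ℓᵢ` adds the edge `ua` back.
-/

namespace SimpleGraph

variable {V W α : Type*} {G : SimpleGraph V}

theorem Connected.ncard_range_le [Finite W] {G : SimpleGraph W} (hG : G.Connected)
    (g : W → α) :
    (Set.range g).ncard ≤ {e ∈ G.edgeSet | ¬ (e.map g).IsDiag}.ncard + 1 := by
  set g' := Set.rangeFactorization g
  let Q : SimpleGraph (Set.range g) := fromEdgeSet (Sym2.map g' '' G.edgeSet)
  have hQ : Q.Connected := by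
    have hlift : ∀ x y, G.Adj x y → Relation.ReflTransGen Q.Adj (g' x) (g' y) := by
      intro x y hxy
      by_cases h : g' x = g' y
      · exact h ▸ .refl
      · exact .single ⟨⟨s(x, y), hxy, rfl⟩, h⟩
    have : Nonempty W := hG.nonempty
    refine ⟨fun c c' => ?_⟩
    obtain ⟨x, rfl⟩ := Set.rangeFactorization_surjective c
    obtain ⟨y, rfl⟩ := Set.rangeFactorization_surjective c'
    rw [reachable_iff_reflTransGen]
    exact Relation.ReflTransGen.lift' g' hlift _ _
      ((reachable_iff_reflTransGen x y).1 (hG.preconnected x y))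
  have hsub : Q.edgeSet ⊆ Sym2.map g' '' {e ∈ G.edgeSet | ¬ (e.map g).IsDiag} := by
    rw [edgeSet_fromEdgeSet]
    rintro _ ⟨⟨e, he, rfl⟩, hdiag⟩
    refine ⟨e, ⟨he, fun h => hdiag ?_⟩, rfl⟩
    rwa [Sym2.mem_diagSet, ← Sym2.isDiag_map Subtype.val_injective, Sym2.map_map]
  calc (Set.range g).ncard = Nat.card (Set.range g) := rfl
    _ ≤ Nat.card Q.edgeSet + 1 := hQ.card_vert_le_card_edgeSet_add_one
    _ ≤ _ := by
      gcongr
      exact (Set.ncard_le_ncard hsub (Set.toFinite _)).trans (Set.ncard_image_le (Set.toFinite _))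

theorem Subgraph.Connected.ncard_image_verts_le [Finite V] {H : G.Subgraph} (hH : H.Connected)
    (g : V → α) :
    (g '' H.verts).ncard ≤ {e ∈ H.edgeSet | ¬ (e.map g).IsDiag}.ncard + 1 := by
  have hcoe := hH.coe.ncard_range_le (g ∘ Subtype.val)
  rw [Set.range_comp, Subtype.range_coe] at hcoe
  refine hcoe.trans (Nat.add_le_add_right ?_ 1)
  refine Set.ncard_le_ncard_of_injOn (Sym2.map Subtype.val) ?_
    (Sym2.map.injective Subtype.val_injective).injOn (Set.toFinite _)
  rintro e ⟨he, hdiag⟩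
  rw [Subgraph.edgeSet_coe] at he
  exact ⟨he, by rwa [Sym2.map_map]⟩

namespace Walk

theorem dist_add_dist_le_length {u v w : V} (p : G.Walk u v) (hw : w ∈ p.support) :
    G.dist u w + G.dist w v ≤ p.length := by
  conv_rhs => rw [← p.take_spec hw, length_append]
  exact add_le_add (dist_le _) (dist_le _)

theorem exists_mem_support_reachable_deleteEdges_sym2 {B : Set V} {u v : V}
    (p : G.Walk u v) (h : ¬ (G.deleteEdges B.sym2).Reachable u v) :
    ∃ b ∈ p.support, b ∈ B ∧ (G.deleteEdges B.sym2).Reachable u b := by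
  induction p with
  | nil => exact absurd .rfl h
  | @cons u x v hadj p ih =>
    by_cases hux : s(u, x) ∈ B.sym2
    · exact ⟨u, p.cons hadj |>.start_mem_support, hux.1, .rfl⟩
    · have hstep : (G.deleteEdges B.sym2).Adj u x := deleteEdges_adj.2 ⟨hadj, hux⟩
      obtain ⟨b, hb, hbB, hxb⟩ := ih fun hxv => h (hstep.reachable.trans hxv)
      exact ⟨b, List.mem_cons_of_mem _ hb, hbB, hstep.reachable.trans hxb⟩

end Walk

theorem reachable_deleteEdges_sym2_of_dist_eq {K : Set V} {u a v : V} (hG : G.Connected)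
    (hK : G.IsClique K) (hu : u ∈ K) (q : G.Walk a v)
    (hq : G.dist u v = q.length + 1) : (G.deleteEdges K.sym2).Reachable a v := by
  have hK_inter : ∀ y ∈ q.support, y ∈ K → y = a := by
    intro y hy hyK
    have hdist_uy : G.dist u y ≤ 1 := by
      rcases eq_or_ne u y with rfl | hne
      · simp
      · exact (dist_eq_one_iff_adj.2 (hK hu hyK hne)).le
    have := q.dist_add_dist_le_length hy
    have := hG.dist_triangle (u := u) (v := y) (w := v)
    exact ((hG.dist_eq_zero_iff).1 (by omega)).symm
  refine ⟨q.toDeleteEdges K.sym2 fun e he heK => ?_⟩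
  induction e with
  | _ x y =>
    have hx := hK_inter x (q.fst_mem_support_of_mem_edges he) heK.1
    have hy := hK_inter y (q.snd_mem_support_of_mem_edges he) heK.2
    exact (q.adj_of_mem_edges he).ne (hx.trans hy.symm)

theorem induce_connected_of_forall_adj {A : Set V} {z : V} (hz : z ∈ A)
    (h : ∀ c ∈ A, c ≠ z → G.Adj z c) : (G.induce A).Connected := by
  refine (connected_iff_exists_forall_reachable _).2 ⟨⟨z, hz⟩, fun ⟨c, hc⟩ => ?_⟩
  rcases eq_or_ne c z with rfl | hcz
  · rfl
  · exact Adj.reachable (G := G.induce A) (h c hc hcz)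

theorem exists_connected_subgraph_ncard_edgeSet_add_le (μ : Finset V → ℕ) (c : ℕ)
    (hsingle : ∀ x, c ≤ μ {x})
    (hstep : ∀ S : Finset V, 1 < S.card →
      ∃ u ∈ S, ∃ a, G.Adj u a ∧ μ (insert a (S.erase u)) < μ S)
    {S : Finset V} (hS : S.Nonempty) :
    ∃ H : G.Subgraph, H.Connected ∧ ↑S ⊆ H.verts ∧ H.edgeSet.ncard + c ≤ μ S := by
  induction hμ : μ S using Nat.strong_induction_on generalizing S with
  | _ n ih =>
  subst hμ
  rcases hS.exists_eq_singleton_or_nontrivial with ⟨x, rfl⟩ | hnt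
  · exact ⟨G.singletonSubgraph x, Subgraph.singletonSubgraph_connected, by simp,
      by simpa [edgeSet_singletonSubgraph] using hsingle x⟩
  obtain ⟨u, hu, a, hadj, hlt⟩ := hstep S (Finset.one_lt_card_iff_nontrivial.2 hnt)
  obtain ⟨H, hH, hSH, hcard⟩ := ih _ hlt (Finset.insert_nonempty _ _) rfl
  have hedge : (H ⊔ G.subgraphOfAdj hadj).edgeSet.ncard ≤ H.edgeSet.ncard + 1 := by
    rw [Subgraph.edgeSet_sup, edgeSet_subgraphOfAdj, ← Set.ncard_singleton s(u, a)]
    exact Set.ncard_union_le _ _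
  refine ⟨H ⊔ G.subgraphOfAdj hadj, ?_, fun z hz => ?_, by omega⟩
  · exact Subgraph.connected_sup hH.preconnected
      (Subgraph.subgraphOfAdj_connected hadj).preconnected
      ⟨a, hSH (by simp), by simp⟩
  · rcases eq_or_ne z u with rfl | hzu
    · exact Or.inr (by simp)
    · exact Or.inl (hSH (by simp [hzu, Finset.mem_coe.1 hz]))

end SimpleGraph

section Blocks

variable {V : Type*} {G : SimpleGraph V}

theorem isBiconnectedSet_union_of_isClique {P Q : Set V} (hP : G.IsClique P)
    (hQ : G.IsClique Q) {x y : V} (hx : x ∈ P ∩ Q) (hy : y ∈ P ∩ Q) (hxy : x ≠ y) :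
    IsBiconnectedSet G (P ∪ Q) := by
  have hstar : ∀ z ∈ P ∩ Q, ∀ c ∈ P ∪ Q, c ≠ z → G.Adj z c := by
    rintro z ⟨hzP, hzQ⟩ c (hc | hc) hcz
    exacts [hP hzP hc hcz.symm, hQ hzQ hc hcz.symm]
  refine ⟨induce_connected_of_forall_adj (Or.inl hx.1) (hstar x hx), fun v _ _ => ?_⟩
  obtain ⟨z, hz, hzv⟩ : ∃ z ∈ P ∩ Q, z ≠ v := by
    rcases eq_or_ne x v with rfl | hxv
    exacts [⟨y, hy, hxy.symm⟩, ⟨x, hx, hxv⟩]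
  exact induce_connected_of_forall_adj ⟨Or.inl hz.1, hzv⟩
    fun c hc hcz => hstar z hz c hc.1 hcz

theorem IsBlock.eq_of_mem_of_mem {B₁ B₂ : Set V} (h₁ : IsBlock G B₁) (h₂ : IsBlock G B₂)
    (hc₁ : G.IsClique B₁) (hc₂ : G.IsClique B₂) {x y : V} (hx : x ∈ B₁ ∩ B₂)
    (hy : y ∈ B₁ ∩ B₂) (hxy : x ≠ y) : B₁ = B₂ := by
  have hbic := isBiconnectedSet_union_of_isClique hc₁ hc₂ hx hy hxy
  have hfin : (B₁ ∪ B₂).Finite := by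
    refine (Set.finite_of_ncard_pos ?_).union (Set.finite_of_ncard_pos ?_) <;> linarith [h₁.1, h₂.1]
  have hcard : 2 ≤ (B₁ ∪ B₂).ncard := h₁.1.trans (Set.ncard_le_ncard Set.subset_union_left hfin)
  exact (h₁.2.2 _ Set.subset_union_left hcard hbic).symm.trans
    (h₂.2.2 _ Set.subset_union_right hcard hbic)

theorem exists_isBlock_of_adj [Finite V] {u a : V} (h : G.Adj u a) :
    ∃ B, IsBlock G B ∧ u ∈ B ∧ a ∈ B := by
  have hpair : G.IsClique {u, a} := isClique_pair.2 fun _ => h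
  have hbic := isBiconnectedSet_union_of_isClique hpair hpair (x := u) (y := a)
    (by simp) (by simp) h.ne
  rw [Set.union_self] at hbic
  obtain ⟨B, hsub, hB⟩ := (Set.toFinite {B : Set V | 2 ≤ B.ncard ∧ IsBiconnectedSet G B})
    |>.exists_le_maximal (a := {u, a}) ⟨(Set.ncard_pair h.ne).ge, hbic⟩
  exact ⟨B, ⟨hB.prop.1, hB.prop.2, fun B' hBB' h2 hbic' => hB.eq_of_superset ⟨h2, hbic'⟩ hBB'⟩,
    hsub (by simp), hsub (by simp)⟩

end Blocks

theorem Finset.sum_card_image_insert_erase_lt {V ι β : Type*} [Fintype ι] [DecidableEq β]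
    {f : V → ι → β} {S : Finset V} {u a : V} (hu : u ∈ S) (ha : ∀ j, f a j ∈ S.image (f · j))
    {i : ι} (hi : f u i ∉ (insert a (S.erase u)).image (f · i)) :
    ∑ j, ((insert a (S.erase u)).image (f · j)).card < ∑ j, (S.image (f · j)).card := by
  have hsub : ∀ j, (insert a (S.erase u)).image (f · j) ⊆ S.image (f · j) := fun j => by
    rw [Finset.image_insert]
    exact Finset.insert_subset (ha j) (Finset.image_subset_image (Finset.erase_subset _ _))
  refine Finset.sum_lt_sum (fun j _ => Finset.card_le_card (hsub j)) ⟨i, Finset.mem_univ _, ?_⟩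
  exact Finset.card_lt_card (Finset.ssubset_iff_subset_ne.2
    ⟨hsub i, fun h => hi (h ▸ Finset.mem_image_of_mem _ hu)⟩)

section BlockCoordinates

variable {V ι β : Type*} {G : SimpleGraph V} {Bl : ι → Set V} {f : V → ι → β}

theorem coord_eq_of_adj_of_mem_block (hB : ∀ i, IsBlock G (Bl i))
    (hclique : ∀ i, G.IsClique (Bl i)) (hinj : Function.Injective Bl)
    (hcomp : ∀ i u w, (G.deleteEdges (Bl i).sym2).Reachable u w → f u i = f w i)
    {u a : V} (hadj : G.Adj u a) {i : ι} (hu : u ∈ Bl i) (ha : a ∈ Bl i) {j : ι} (hji : j ≠ i) :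
    f u j = f a j := by
  refine hcomp j u a (deleteEdges_adj.2 ⟨hadj, fun hua => hji (hinj ?_)⟩).reachable
  exact IsBlock.eq_of_mem_of_mem (hB j) (hB i) (hclique j) (hclique i) ⟨hua.1, hu⟩ ⟨hua.2, ha⟩
    hadj.ne

theorem sum_card_image_le_ncard_edgeSet_add [Finite V] [Fintype ι] [DecidableEq β]
    (hB : ∀ i, IsBlock G (Bl i)) (hclique : ∀ i, G.IsClique (Bl i))
    (hinj : Function.Injective Bl)
    (hcomp : ∀ i u w, (G.deleteEdges (Bl i).sym2).Reachable u w → f u i = f w i)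
    {H : G.Subgraph} (hH : H.Connected) {S : Finset V} (hSH : ↑S ⊆ H.verts) :
    ∑ i, (S.image (f · i)).card ≤ H.edgeSet.ncard + Fintype.card ι := by
  set A : ι → Set (Sym2 V) := fun i => {e ∈ H.edgeSet | ¬ (e.map (f · i)).IsDiag}
  have hA : ∀ i, A i ⊆ G.edgeSet ∩ (Bl i).sym2 := by
    rintro i e ⟨he, hdiag⟩
    induction e with
    | _ x y =>
      refine ⟨H.edgeSet_subset he, by_contra fun hxy => hdiag ?_⟩
      exact hcomp i x y (deleteEdges_adj.2 ⟨H.adj_sub he, hxy⟩).reachable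
  have hdisj : Pairwise (Function.onFun Disjoint A) := by
    refine fun i j hij => Set.disjoint_left.2 fun e hei hej => ?_
    obtain ⟨heG, hei⟩ := hA i hei
    obtain ⟨-, hej⟩ := hA j hej
    induction e with
    | _ x y => exact hij (hinj (IsBlock.eq_of_mem_of_mem (hB i) (hB j) (hclique i) (hclique j)
        ⟨hei.1, hej.1⟩ ⟨hei.2, hej.2⟩ heG.ne))
  have hsum : ∑ i, (A i).ncard ≤ H.edgeSet.ncard := by
    rw [← finsum_eq_sum_of_fintype, ← Set.ncard_iUnion_of_finite (fun _ => Set.toFinite _) hdisj]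
    exact Set.ncard_le_ncard (Set.iUnion_subset fun i => Set.sep_subset _ _) (Set.toFinite _)
  have hcoord : ∀ i, (S.image (f · i)).card ≤ (A i).ncard + 1 := fun i =>
    calc (S.image (f · i)).card = ((f · i) '' S).ncard := by
          rw [← Finset.coe_image, Set.ncard_coe_finset]
      _ ≤ ((f · i) '' H.verts).ncard := Set.ncard_le_ncard (Set.image_mono hSH) (Set.toFinite _)
      _ ≤ (A i).ncard + 1 := hH.ncard_image_verts_le _
  calc ∑ i, (S.image (f · i)).card ≤ ∑ i, ((A i).ncard + 1) :=
        Finset.sum_le_sum fun i _ => hcoord i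
    _ = ∑ i, (A i).ncard + Fintype.card ι := by simp [Finset.sum_add_distrib]
    _ ≤ H.edgeSet.ncard + Fintype.card ι := by omega

theorem exists_adj_sum_card_image_insert_erase_lt [Finite V] [Fintype ι] [DecidableEq β]
    (hG : G.Connected) (hB : ∀ i, IsBlock G (Bl i)) (hclique : ∀ i, G.IsClique (Bl i))
    (hinj : Function.Injective Bl) (hall : ∀ C, IsBlock G C → ∃ i, C = Bl i)
    (hdistinct : ∀ i, Set.InjOn (f · i) (Bl i))
    (hcomp : ∀ i u w, (G.deleteEdges (Bl i).sym2).Reachable u w → f u i = f w i)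
    {S : Finset V} (hS : 1 < S.card) :
    ∃ u ∈ S, ∃ a, G.Adj u a ∧
      ∑ i, ((insert a (S.erase u)).image (f · i)).card < ∑ i, (S.image (f · i)).card := by
  obtain ⟨x, hx, y, hy, hxy⟩ := Finset.one_lt_card.1 hS
  obtain ⟨⟨u, v⟩, huv, hmax⟩ := Finset.exists_max_image (S ×ˢ S) (fun p => G.dist p.1 p.2)
    ⟨(x, y), Finset.mem_product.2 ⟨hx, hy⟩⟩
  obtain ⟨hu, hv⟩ := Finset.mem_product.1 huv
  have hfar : ∀ w ∈ S, G.dist w v ≤ G.dist u v := fun w hw =>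
    hmax (w, v) (Finset.mem_product.2 ⟨hw, hv⟩)
  have hne : u ≠ v := by
    rintro rfl
    have := hmax (x, y) (Finset.mem_product.2 ⟨hx, hy⟩)
    exact (hG.pos_dist_of_ne hxy).ne' (by simpa using this)
  obtain ⟨p, hp⟩ := hG.exists_walk_length_eq_dist u v
  cases p with
  | nil => exact absurd rfl hne
  | @cons _ a _ hadj q =>
  obtain ⟨i, hui, hai⟩ : ∃ i, u ∈ Bl i ∧ a ∈ Bl i := by
    obtain ⟨C, hC, huC, haC⟩ := exists_isBlock_of_adj hadj
    obtain ⟨i, rfl⟩ := hall C hC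
    exact ⟨i, huC, haC⟩
  have hav : f a i = f v i := hcomp i a v
    (reachable_deleteEdges_sym2_of_dist_eq hG (hclique i) hui q (by simpa using hp.symm))
  have hau : f a i ≠ f u i := (hdistinct i).ne hai hui hadj.ne'
  have hunique : ∀ w ∈ S, f w i = f u i → w = u := by
    intro w hw hwu
    by_contra hwu'
    obtain ⟨r, hr⟩ := hG.exists_walk_length_eq_dist w v
    obtain ⟨b, hb, hbB, hwb⟩ := r.exists_mem_support_reachable_deleteEdges_sym2
      fun hwv => hau (hav.trans ((hcomp i w v hwv).symm.trans hwu))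
    obtain rfl : b = u := hdistinct i hbB hui ((hcomp i w b hwb).symm.trans hwu)
    have := r.dist_add_dist_le_length hb
    have := hG.pos_dist_of_ne hwu'
    have := hfar w hw
    omega
  refine ⟨u, hu, a, hadj, Finset.sum_card_image_insert_erase_lt hu (fun j => ?_) (i := i) ?_⟩
  · rcases eq_or_ne j i with rfl | hji
    · exact hav ▸ Finset.mem_image_of_mem _ hv
    · exact coord_eq_of_adj_of_mem_block hB hclique hinj hcomp hadj hui hai hji ▸
        Finset.mem_image_of_mem _ hu
  · simp only [Finset.mem_image, Finset.mem_insert, Finset.mem_erase, not_exists, not_and]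
    rintro z (rfl | ⟨hzu, hz⟩)
    · exact hau
    · exact fun h => hzu (hunique z hz h)

end BlockCoordinates

theorem stmt3_general {V : Type*} [Fintype V] (G : SimpleGraph V)
    (hbg : IsBlockGraph G) (t : ℕ) (Bl : Fin t → Set V)
    (hB : ∀ i, IsBlock G (Bl i)) (hinj : Function.Injective Bl)
    (hall : ∀ C : Set V, IsBlock G C → ∃ i, C = Bl i)
    (f : V → Fin t → ℕ)
    (hdistinct : ∀ i, Set.InjOn (fun v => f v i) (Bl i))
    (hcomp : ∀ i : Fin t, ∀ u w : V,
      (G.deleteEdges {e | ∀ x ∈ e, x ∈ Bl i}).Reachable u w → f u i = f w i)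
    (S : Finset V) (hS : 2 ≤ S.card) :
    steinerDist G ↑S + t = ∑ i : Fin t, (S.image (fun v => f v i)).card := by
  have hsym2 : ∀ i, {e : Sym2 V | ∀ x ∈ e, x ∈ Bl i} = (Bl i).sym2 := fun i =>
    Set.ext fun _ => Set.mem_sym2_iff_subset.symm
  simp only [hsym2] at hcomp
  have hclique : ∀ i, G.IsClique (Bl i) := fun i => hbg.2 _ (hB i)
  obtain ⟨H₀, hH₀, hSH₀, hH₀card⟩ := exists_connected_subgraph_ncard_edgeSet_add_le (G := G)
    (fun S => ∑ i, (S.image (f · i)).card) t (by simp)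
    (fun S hS => exists_adj_sum_card_image_insert_erase_lt hbg.1 hB hclique hinj hall hdistinct
      hcomp hS)
    (Finset.card_pos.1 (by omega : 0 < S.card))
  have hmem : H₀.edgeSet.ncard ∈
      {m | ∃ H : G.Subgraph, H.Connected ∧ ↑S ⊆ H.verts ∧ H.edgeSet.ncard = m} :=
    ⟨H₀, hH₀, hSH₀, rfl⟩
  obtain ⟨H, hH, hSH, hcard⟩ := Nat.sInf_mem ⟨_, hmem⟩
  have hlower := sum_card_image_le_ncard_edgeSet_add hB hclique hinj hcomp hH hSH
  rw [Fintype.card_fin, hcard] at hlower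
  have hupper := Nat.sInf_le hmem
  unfold steinerDist
  omega

/-- For a block graph labelled by Hamming coordinates indexed by its blocks
(vertices of a block get pairwise distinct i-th coordinates, and the i-th coordinate is
constant on components of G minus the edges of block i), the Steiner distance of a set
S of at least two vertices satisfies d(S) = (sum_i l_i(S)) - t, where l_i(S) is the
number of distinct i-th coordinates on S. -/
theorem stmt3 {V : Type*} [Fintype V] [DecidableEq V] (G : SimpleGraph V)
    (hbg : IsBlockGraph G) (t : ℕ) (Bl : Fin t → Set V)
    (hB : ∀ i, IsBlock G (Bl i)) (hinj : Function.Injective Bl)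
    (hall : ∀ C : Set V, IsBlock G C → ∃ i, C = Bl i)
    (f : V → Fin t → ℕ)
    (hdistinct : ∀ i, Set.InjOn (fun v => f v i) (Bl i))
    (hcomp : ∀ i : Fin t, ∀ u w : V,
      (G.deleteEdges {e | ∀ x ∈ e, x ∈ Bl i}).Reachable u w → f u i = f w i)
    (S : Finset V) (hS : 2 ≤ S.card) :
    steinerDist G ↑S + t = ∑ i : Fin t, (S.image (fun v => f v i)).card :=
  stmt3_general G hbg t Bl hB hinj hall f hdistinct hcomp S hS
end

section
/- Let G be a connected block graph. Then the Wiener index of G equals ∑_{ab ∈ E(G)} N_{ab} · N_{ba}, where N_{ab} is the number of vertices strictly closer to a than to b, and N_{ba} the number strictly closer to b than to a. -/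
/-!
Expanding the product `N_ab * N_ba` and exchanging sums, the right-hand side counts triples
`(ab, u, v)` where `ab` is an edge, `u` is strictly closer to `a` and `v` strictly closer to `b`.
So it suffices that for fixed `u, v` exactly `d(u, v)` edges `ab` qualify.

In a block graph the vertices of every cycle form a clique (a cycle is biconnected, hence lies in a
block). Closing up paths through vertices nearer to `u` into cycles, this gives: two adjacent
vertices at the same distance from `u` have a common neighbour one step closer to `u`, and every
vertex `x ≠ u` has a unique neighbour one step closer to `u`. Consequently, for every qualifying
edge `ab`, `d(u, v) = d(u, a) + 1 + d(b, v)`, and a vertex on a geodesic from `u` to `v` is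
determined by its distance from `u`. The map `ab ↦ d(u, a)` is therefore a bijection from the
qualifying edges onto `{0, …, d(u, v) - 1}`.
-/

open SimpleGraph Finset
open scoped Classical

section

variable {V : Type*} {G : SimpleGraph V}

namespace SimpleGraph

def CyclesSpanCliques (G : SimpleGraph V) : Prop :=
  ∀ ⦃v : V⦄ (c : G.Walk v v), c.IsCycle → G.IsClique {x | x ∈ c.support}

lemma Adj.dist_lt_dist_iff {a b : V} (hab : G.Adj a b) (w : V) :
    G.dist a w < G.dist b w ↔ G.dist w b = G.dist w a + 1 := by
  rw [dist_comm (u := a), dist_comm (u := b)]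
  have := hab.diff_dist_adj (u := w)
  omega

namespace Walk

lemma IsCycle.isBiconnectedSet_support {v : V} {c : G.Walk v v} (hc : c.IsCycle) :
    IsBiconnectedSet G {x | x ∈ c.support} := by
  refine ⟨c.connected_induce_support, fun w hw _ => ?_⟩
  -- Rotated to start at `w`, the cycle is `w` followed by a path `q` ending in `w`;
  -- the other vertices form `q` with its last vertex dropped.
  have hc' : (c.rotate w hw).IsCycle := hc.rotate hw
  set q := (c.rotate w hw).tail
  have hq : q.IsPath := hc'.isPath_tail
  have hqnil : ¬q.Nil := fun h => ((c.rotate w hw).adj_snd hc'.not_nil).ne h.eq.symm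
  have hsupp : {x | x ∈ c.support} \ {w} = {x | x ∈ q.dropLast.support} := by
    have hnd := hq.support_nodup
    rw [← support_dropLast_concat hqnil, List.nodup_append] at hnd
    ext x
    rw [Set.mem_sdiff, Set.mem_ofPred_eq, Set.mem_ofPred_eq, Set.mem_singleton_iff,
      ← c.mem_support_rotate_iff w hw, ← cons_support_tail hc'.not_nil, List.mem_cons,
      ← support_dropLast_concat hqnil, List.mem_append, List.mem_singleton]
    grind
  rw [hsupp]
  exact q.dropLast.connected_induce_support

lemma dist_lt_of_mem_support {u x t : V} (p : G.Walk u x) (hp : p.length = G.dist u x)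
    (ht : t ∈ p.support) (htx : t ≠ x) : G.dist u t < G.dist u x := by
  obtain ⟨q, r, rfl⟩ := mem_support_iff_exists_append.mp ht
  have hr : 0 < r.length := not_nil_iff_lt_length.mp fun h => htx h.eq
  have hq := G.dist_le q
  rw [length_append] at hp
  omega

lemma snd_ne_of_notMem_edges {a b : V} {p : G.Walk a b} (hp : ¬p.Nil)
    (he : s(a, b) ∉ p.edges) : p.snd ≠ b := by
  intro h
  have := mk_start_snd_mem_edges hp
  rw [h] at this
  exact he this

end Walk

end SimpleGraph

lemma IsBlockGraph.isClique_of_isBiconnectedSet [Finite V] (hbg : IsBlockGraph G) {S : Set V} (hS : IsBiconnectedSet G S) (hS2 : 2 ≤ S.ncard) :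
    G.IsClique S := by
  obtain ⟨B, hSB, hB⟩ := Set.Finite.exists_le_maximal
    (Set.toFinite {B : Set V | S ⊆ B ∧ IsBiconnectedSet G B}) ⟨subset_rfl, hS⟩
  have hblock : IsBlock G B :=
    ⟨hS2.trans (Set.ncard_le_ncard hSB), hB.prop.2,
      fun B' hBB' _ hB' => hB.eq_of_ge ⟨hB.prop.1.trans hBB', hB'⟩ hBB'⟩
  exact (hbg.2 B hblock).subset hSB

lemma IsBlockGraph.cyclesSpanCliques [Finite V] (hbg : IsBlockGraph G) : G.CyclesSpanCliques := by
  intro v c hc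
  refine hbg.isClique_of_isBiconnectedSet hc.isBiconnectedSet_support ?_
  have hv : v ≠ c.snd := (c.adj_snd hc.not_nil).ne
  calc 2 = ({v, c.snd} : Set V).ncard := (Set.ncard_pair hv).symm
    _ ≤ _ := Set.ncard_le_ncard (Set.insert_subset c.start_mem_support
        (Set.singleton_subset_iff.mpr (c.getVert_mem_support 1)))

namespace SimpleGraph

namespace Connected

lemma exists_adj_dist_add_one_eq (hG : G.Connected) {u x : V} (hux : u ≠ x) :
    ∃ g, G.Adj g x ∧ G.dist u g + 1 = G.dist u x := by
  obtain ⟨p, hp⟩ := hG.exists_walk_length_eq_dist u x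
  have hnil : ¬p.Nil := fun h => hux h.eq
  have hadj := p.adj_penultimate hnil
  refine ⟨p.penultimate, hadj, ?_⟩
  have h1 := G.dist_le p.dropLast
  have h2 := p.length_dropLast_add_one hnil
  have h3 := hadj.diff_dist_adj (u := u)
  omega

lemma exists_dist_eq_of_le (hG : G.Connected) {u v : V} {j : ℕ} (hj : j ≤ G.dist u v) :
    ∃ x, G.dist u x = j ∧ G.dist u x + G.dist x v = G.dist u v := by
  obtain ⟨p, hp⟩ := hG.exists_walk_length_eq_dist u v
  refine ⟨p.getVert j, ?_⟩
  have h1 := G.dist_le (p.take j)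
  have h2 := G.dist_le (p.drop j)
  have h3 := hG.dist_triangle (u := u) (v := p.getVert j) (w := v)
  rw [Walk.take_length] at h1
  rw [Walk.drop_length] at h2
  omega

lemma exists_isPath_dist_lt (hG : G.Connected) {u x y : V} (hxy : x ≠ y)
    (h : G.dist u x = G.dist u y) :
    ∃ p : G.Walk x y, p.IsPath ∧ s(x, y) ∉ p.edges ∧
      ∀ t ∈ p.support, t ≠ x → t ≠ y → G.dist u t < G.dist u x := by
  obtain ⟨P, hP⟩ := hG.exists_walk_length_eq_dist u x
  obtain ⟨Q, hQ⟩ := hG.exists_walk_length_eq_dist u y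
  have hlow : ∀ t ∈ (P.reverse.append Q).support, t ≠ x → t ≠ y →
      G.dist u t < G.dist u x := by
    intro t ht htx hty
    rw [Walk.mem_support_append_iff, Walk.support_reverse, List.mem_reverse] at ht
    rcases ht with ht | ht
    · exact P.dist_lt_of_mem_support hP ht htx
    · exact h ▸ Q.dist_lt_of_mem_support hQ ht hty
  refine ⟨_, Walk.bypass_isPath _, fun he => ?_,
    fun t ht => hlow t (Walk.support_bypass_subset_support _ ht)⟩
  replace he := Walk.edges_bypass_subset_edges _ he
  rw [Walk.edges_append, List.mem_append, Walk.edges_reverse, List.mem_reverse] at he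
  rcases he with he | he
  · exact (P.dist_lt_of_mem_support hP (P.snd_mem_support_of_mem_edges he) hxy.symm).ne h.symm
  · exact (Q.dist_lt_of_mem_support hQ (Q.fst_mem_support_of_mem_edges he) hxy).ne h

lemma exists_adj_dist_lt_of_lt (hG : G.Connected) {u v : V} {k : ℕ} (hk : k < G.dist u v) :
    ∃ a b, G.Adj a b ∧ G.dist a u < G.dist b u ∧ G.dist b v < G.dist a v ∧ G.dist u a = k := by
  obtain ⟨b, hb, hbv⟩ := hG.exists_dist_eq_of_le (j := k + 1) hk
  obtain ⟨a, hab, ha⟩ := hG.exists_adj_dist_add_one_eq (u := u) (x := b)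
    fun h => by subst h; rw [dist_self] at hb; omega
  have := hG.dist_triangle (u := u) (v := a) (w := v)
  have := hab.diff_dist_adj (u := v)
  have : G.dist a v = G.dist v a := dist_comm
  have : G.dist b v = G.dist v b := dist_comm
  exact ⟨a, b, hab, (hab.dist_lt_dist_iff u).mpr (by omega),
    (hab.symm.dist_lt_dist_iff v).mpr (by omega), by omega⟩

end Connected

namespace CyclesSpanCliques

lemma isClique_support (hC : G.CyclesSpanCliques) {a b : V} (hab : G.Adj a b)
    {p : G.Walk a b} (hp : p.IsPath) (he : s(a, b) ∉ p.edges) : G.IsClique {x | x ∈ p.support} :=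
  (hC _ ((Walk.cons_isCycle_iff p hab.symm).mpr ⟨hp, by rwa [Sym2.eq_swap]⟩)).subset
    fun x hx => by simp [Set.mem_ofPred_eq.mp hx]

lemma exists_adj_adj_dist_add_one_eq (hC : G.CyclesSpanCliques) (hG : G.Connected) {u x y : V}
    (hxy : G.Adj x y) (h : G.dist u x = G.dist u y) :
    ∃ g, G.Adj g x ∧ G.Adj g y ∧ G.dist u g + 1 = G.dist u x := by
  obtain ⟨p, hp, he, hlow⟩ := hG.exists_isPath_dist_lt hxy.ne h
  have hnil : ¬p.Nil := fun hn => hxy.ne hn.eq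
  have hgx : p.snd ≠ x := (p.adj_snd hnil).ne.symm
  have hgy : p.snd ≠ y := Walk.snd_ne_of_notMem_edges hnil he
  have hmem : p.snd ∈ p.support := p.getVert_mem_support 1
  have hclique := hC.isClique_support hxy hp he
  have hadjx : G.Adj p.snd x := hclique hmem p.start_mem_support hgx
  refine ⟨p.snd, hadjx, hclique hmem p.end_mem_support hgy, ?_⟩
  have h1 := hlow _ hmem hgx hgy
  have h2 := hadjx.diff_dist_adj (u := u)
  omega

lemma eq_of_adj_of_dist_add_one_eq (hC : G.CyclesSpanCliques) (hG : G.Connected) {u x y z : V}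
    (hyx : G.Adj y x) (hzx : G.Adj z x) (hy : G.dist u y + 1 = G.dist u x)
    (hz : G.dist u z + 1 = G.dist u x) : y = z := by
  -- Otherwise a path from `y` to `z` through vertices closer to `u`, closed up through `x`, is a
  -- cycle; its clique makes `x` adjacent to a vertex two steps closer to `u`.
  by_contra hyz
  obtain ⟨p, hp, he, hlow⟩ := hG.exists_isPath_dist_lt (u := u) hyz (by omega)
  have hx : x ∉ p.support := by
    intro hx
    have := hlow x hx hyx.ne.symm hzx.ne.symm
    omega
  have he' : s(y, x) ∉ (p.concat hzx).edges := by
    rw [Walk.edges_concat, List.concat_eq_append, List.mem_append, List.mem_singleton]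
    rintro (h | h)
    · exact hx (p.snd_mem_support_of_mem_edges h)
    · exact hyz (Sym2.congr_left.mp h)
  have hclique := hC.isClique_support hyx (hp.concat hx hzx) he'
  have hnil : ¬p.Nil := fun hn => hyz hn.eq
  have hmem : p.snd ∈ p.support := p.getVert_mem_support 1
  have htx : G.Adj p.snd x :=
    hclique (by simp [Walk.support_concat, hmem]) (p.concat hzx).end_mem_support
      fun h => hx (h ▸ hmem)
  have h1 := hlow _ hmem (p.adj_snd hnil).ne.symm (Walk.snd_ne_of_notMem_edges hnil he)
  have h2 := htx.diff_dist_adj (u := u)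
  omega

lemma dist_eq_dist_add_one_add_dist (hC : G.CyclesSpanCliques) (hG : G.Connected) {u v a b : V}
    (hab : G.Adj a b) (hu : G.dist u b = G.dist u a + 1) (hv : G.dist v a = G.dist v b + 1) :
    G.dist u v = G.dist u a + 1 + G.dist b v := by
  -- Induct on `d(v, b)`, stepping from `b` to a neighbour `b'` closer to `v`. By uniqueness of
  -- neighbours one step closer to `u`, `b'` is neither level with `a` (it would be `a`) nor level
  -- with `b` (their common lower neighbour would be `a`, adjacent to `b'`), so `b'` is one step
  -- further from `u` than `b` and the edge `bb'` is in the same position as `ab`.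
  obtain ⟨n, hn⟩ : ∃ n, G.dist v b = n := ⟨_, rfl⟩
  induction n generalizing a b with
  | zero =>
    obtain rfl := hG.dist_eq_zero_iff.mp hn
    rw [dist_self]
    omega
  | succ k ih =>
    obtain ⟨b', hb'b, hb'⟩ := hG.exists_adj_dist_add_one_eq (u := v) (x := b)
      fun h => by rw [h, dist_self] at hn; omega
    have hvb := hb'b.diff_dist_adj (u := u)
    rcases hvb with hub' | hub' | hub'
    · obtain ⟨g, hgb', hgb, hg⟩ := hC.exists_adj_adj_dist_add_one_eq hG hb'b hub'.symm
      obtain rfl := hC.eq_of_adj_of_dist_add_one_eq hG hab hgb hu.symm (by omega)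
      have := hgb'.diff_dist_adj (u := v)
      omega
    · obtain rfl := hC.eq_of_adj_of_dist_add_one_eq hG hab hb'b hu.symm (by omega)
      omega
    · have := ih hb'b.symm (by omega) (by omega) (by omega)
      have : G.dist b v = G.dist v b := dist_comm
      have : G.dist b' v = G.dist v b' := dist_comm
      omega

lemma eq_of_dist_eq_of_dist_add_dist_eq (hC : G.CyclesSpanCliques) (hG : G.Connected) {u v x y : V}
    (hxy : G.dist u x = G.dist u y) (hx : G.dist u x + G.dist x v = G.dist u v)
    (hy : G.dist u y + G.dist y v = G.dist u v) : x = y := by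
  have gate_mem : ∀ {z g : V}, G.Adj g z → G.dist u g + 1 = G.dist u z →
      G.dist u z + G.dist z v = G.dist u v → G.dist u g + G.dist g v = G.dist u v := by
    intro z g hgz hg hz
    have := hG.dist_triangle (u := u) (v := g) (w := v)
    have := hG.dist_triangle (u := g) (v := z) (w := v)
    have := dist_eq_one_iff_adj.mpr hgz
    omega
  obtain ⟨k, hk⟩ : ∃ k, G.dist u x = k := ⟨_, rfl⟩
  induction k generalizing x y with
  | zero =>
    exact (hG.dist_eq_zero_iff.mp hk).symm.trans (hG.dist_eq_zero_iff.mp (by omega))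
  | succ k ih =>
    obtain ⟨gx, hgx, hgxd⟩ := hG.exists_adj_dist_add_one_eq (u := u) (x := x)
      fun h => by rw [h, dist_self] at hk; omega
    obtain ⟨gy, hgy, hgyd⟩ := hG.exists_adj_dist_add_one_eq (u := u) (x := y)
      fun h => by subst h; rw [dist_self] at hxy; omega
    obtain rfl : gx = gy :=
      ih (x := gx) (y := gy) (by omega) (gate_mem hgx hgxd hx) (gate_mem hgy hgyd hy) (by omega)
    have hgv := gate_mem hgx hgxd hx
    refine hC.eq_of_adj_of_dist_add_one_eq hG (u := v) hgx.symm hgy.symm ?_ ?_ <;>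
      simp only [dist_comm (u := v)] <;> omega

lemma dist_add_dist_eq_of_adj (hC : G.CyclesSpanCliques) (hG : G.Connected) {u v a b : V}
    (hab : G.Adj a b) (hu : G.dist a u < G.dist b u) (hv : G.dist b v < G.dist a v) :
    G.dist u b = G.dist u a + 1 ∧
      G.dist u a + G.dist a v = G.dist u v ∧ G.dist u b + G.dist b v = G.dist u v := by
  rw [hab.dist_lt_dist_iff] at hu
  rw [hab.symm.dist_lt_dist_iff] at hv
  have := hC.dist_eq_dist_add_one_add_dist hG hab hu hv
  have : G.dist a v = G.dist v a := dist_comm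
  have : G.dist b v = G.dist v b := dist_comm
  omega

lemma card_adj_dist_lt (hC : G.CyclesSpanCliques) (hG : G.Connected) [Fintype V] (u v : V) :
    #{e : V × V | G.Adj e.1 e.2 ∧ G.dist e.1 u < G.dist e.2 u ∧ G.dist e.2 v < G.dist e.1 v} =
      G.dist u v := by
  rw [← card_range (G.dist u v)]
  refine card_nbij (fun e => G.dist u e.1) ?_ ?_ ?_
  · rintro ⟨a, b⟩ he
    simp only [mem_coe, mem_filter, mem_univ, true_and] at he
    have := hC.dist_add_dist_eq_of_adj (a := a) (b := b) hG he.1 he.2.1 he.2.2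
    simp only [coe_range, Set.mem_Iio]
    omega
  · rintro ⟨a, b⟩ he ⟨a', b'⟩ he' (h : G.dist u a = G.dist u a')
    simp only [mem_coe, mem_filter, mem_univ, true_and] at he he'
    have hab := hC.dist_add_dist_eq_of_adj (a := a) (b := b) hG he.1 he.2.1 he.2.2
    have hab' := hC.dist_add_dist_eq_of_adj (a := a') (b := b') hG he'.1 he'.2.1 he'.2.2
    rw [Prod.mk.injEq]
    exact ⟨hC.eq_of_dist_eq_of_dist_add_dist_eq hG h hab.2.1 hab'.2.1,
      hC.eq_of_dist_eq_of_dist_add_dist_eq hG (by omega) hab.2.2 hab'.2.2⟩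
  · intro k hk
    rw [coe_range, Set.mem_Iio] at hk
    obtain ⟨a, b, hab, hu, hv, rfl⟩ := hG.exists_adj_dist_lt_of_lt hk
    exact ⟨(a, b), by simpa using ⟨hab, hu, hv⟩, rfl⟩

end CyclesSpanCliques

end SimpleGraph

end

/-- Both sides sum over ordered pairs, so each counts every contribution twice. -/
theorem stmt4 {V : Type*} [Fintype V] (G : SimpleGraph V) (hbg : IsBlockGraph G) :
    ∑ u : V, ∑ v : V, G.dist u v =
      ∑ u : V, ∑ v : V, if G.Adj u v then
        {w : V | G.dist u w < G.dist v w}.ncard *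
          {w : V | G.dist v w < G.dist u w}.ncard
      else 0 := by
  have hC := hbg.cyclesSpanCliques
  calc ∑ u : V, ∑ v : V, G.dist u v
      = ∑ u : V, ∑ v : V, ∑ e : V × V,
          if G.Adj e.1 e.2 ∧ G.dist e.1 u < G.dist e.2 u ∧ G.dist e.2 v < G.dist e.1 v
          then (1 : ℕ) else 0 := by
        refine sum_congr rfl fun u _ => sum_congr rfl fun v _ => ?_
        rw [← card_filter, hC.card_adj_dist_lt hbg.1]
    _ = ∑ e : V × V, ∑ u : V, ∑ v : V,
          if G.Adj e.1 e.2 ∧ G.dist e.1 u < G.dist e.2 u ∧ G.dist e.2 v < G.dist e.1 v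
          then (1 : ℕ) else 0 := by
        exact (sum_congr rfl fun u _ => sum_comm).trans sum_comm
    _ = _ := by
        rw [Fintype.sum_prod_type]
        refine sum_congr rfl fun a _ => sum_congr rfl fun b _ => ?_
        split_ifs with hab
        · rw [Set.ncard_eq_toFinset_card', Set.ncard_eq_toFinset_card', Set.toFinset_ofPred,
            Set.toFinset_ofPred, card_filter, card_filter, sum_mul_sum]
          simp only [hab, true_and, ite_zero_mul_ite_zero, mul_one, ite_and]
        · simp only [hab, false_and, if_false, sum_const_zero]
end

section
/- In a block graph, any two vertices are connected by a unique shortest path. -/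
open SimpleGraph Finset
open scoped Classical

/-!
It suffices that two shortest walks from `u` to `v ≠ u` leave `u` through the same neighbour;
then induct along the walk. Let `y ≠ u` be the common vertex of the two walks closest to `u`.
Their segments from `u` to `y` are shortest paths meeting only in `u` and `y`, so together they
span a cycle, a biconnected set, which lies in some block. Blocks are cliques, so `u` and `y` are
adjacent: both segments are the single edge `uy`.
-/

namespace SimpleGraph

variable {V : Type*} {G : SimpleGraph V}

lemma induce_connected_of_forall_walk {s : Set V} {h : V} (hh : h ∈ s)
    (walk : ∀ x ∈ s, ∃ w : G.Walk h x, ∀ t ∈ w.support, t ∈ s) : (G.induce s).Connected :=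
  induce_connected_of_patches h hh fun hx ↦
    let ⟨w, hw⟩ := walk _ hx
    ⟨_, hw, w.start_mem_support, w.end_mem_support,
      w.connected_induce_support.preconnected _ _⟩

namespace Walk

variable {a b u v x y z : V}

lemma IsPath.notMem_takeUntil_or_notMem_dropUntil [DecidableEq V] {r : G.Walk a b}
    (hr : r.IsPath) (hx : x ∈ r.support) (hzx : z ≠ x) :
    z ∉ (r.takeUntil x hx).support ∨ z ∉ (r.dropUntil x hx).support := by
  by_contra! h
  rw [← r.take_spec hx] at hr
  exact hr.ne_of_mem_support_of_append hzx h.1 h.2 rfl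

lemma IsPath.exists_walk_from_end_avoiding {r : G.Walk a b} (hr : r.IsPath)
    (hx : x ∈ r.support) (hzx : z ≠ x) :
    ∃ e, (e = a ∨ e = b) ∧ ∃ w : G.Walk e x, ∀ t ∈ w.support, t ∈ r.support ∧ t ≠ z := by
  classical
  rcases hr.notMem_takeUntil_or_notMem_dropUntil hx hzx with h | h
  · exact ⟨a, .inl rfl, r.takeUntil x hx, fun t ht ↦
      ⟨r.support_takeUntil_subset_support hx ht, fun htz ↦ h (htz ▸ ht)⟩⟩
  · refine ⟨b, .inr rfl, (r.dropUntil x hx).reverse, fun t ht ↦ ?_⟩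
    rw [support_reverse, List.mem_reverse] at ht
    exact ⟨r.support_dropUntil_subset_support hx ht, fun htz ↦ h (htz ▸ ht)⟩

lemma dist_add_dist_of_mem_support {r : G.Walk u v} (hr : r.length = G.dist u v)
    (hx : x ∈ r.support) : G.dist u x + G.dist x v = G.dist u v := by
  classical
  rw [← length_eq_dist_of_subwalk hr (r.isSubwalk_takeUntil hx),
    ← length_eq_dist_of_subwalk hr (r.isSubwalk_dropUntil hx), ← length_append, take_spec, hr]

end Walk

end SimpleGraph

section BlockGraph

open Walk

variable {V : Type*} {G : SimpleGraph V}

lemma isBiconnectedSet_support_union {u y : V} {p q : G.Walk u y} (hp : p.IsPath) (hq : q.IsPath)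
    (huy : u ≠ y) (hdisj : ∀ z ∈ p.support, z ∈ q.support → z = u ∨ z = y) :
    IsBiconnectedSet G ({x | x ∈ p.support} ∪ {x | x ∈ q.support}) := by
  set S : Set V := {x | x ∈ p.support} ∪ {x | x ∈ q.support}
  refine ⟨induce_union_connected p.connected_induce_support.preconnected
    q.connected_induce_support.preconnected ⟨u, p.start_mem_support, q.start_mem_support⟩,
    fun z _ _ ↦ ?_⟩
  have from_end : ∀ x ∈ S \ {z}, ∃ e, (e = u ∨ e = y) ∧ e ≠ z ∧
      ∃ w : G.Walk e x, ∀ t ∈ w.support, t ∈ S \ {z} := by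
    rintro x ⟨hx | hx, hxz⟩
    · obtain ⟨e, he, w, hw⟩ := hp.exists_walk_from_end_avoiding hx (Ne.symm hxz)
      exact ⟨e, he, (hw e w.start_mem_support).2, w, fun t ht ↦ ⟨.inl (hw t ht).1, (hw t ht).2⟩⟩
    · obtain ⟨e, he, w, hw⟩ := hq.exists_walk_from_end_avoiding hx (Ne.symm hxz)
      exact ⟨e, he, (hw e w.start_mem_support).2, w, fun t ht ↦ ⟨.inr (hw t ht).1, (hw t ht).2⟩⟩
  by_cases hzu : z = u
  · refine induce_connected_of_forall_walk ⟨.inl p.end_mem_support, hzu ▸ huy.symm⟩ fun x hx ↦ ?_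
    obtain ⟨e, he | rfl, hez, w, hw⟩ := from_end x hx
    exacts [absurd (he.trans hzu.symm) hez, ⟨w, hw⟩]
  refine induce_connected_of_forall_walk ⟨.inl p.start_mem_support, Ne.symm hzu⟩ fun x hx ↦ ?_
  obtain ⟨e, rfl | rfl, hez, w, hw⟩ := from_end x hx
  · exact ⟨w, hw⟩
  -- `z` is an inner vertex of at most one of the two paths; follow the other one to `y`.
  obtain ⟨r, hr⟩ : ∃ r : G.Walk u e, ∀ t ∈ r.support, t ∈ S \ {z} := by
    by_cases hzp : z ∈ p.support
    · refine ⟨q, fun t ht ↦ ⟨.inr ht, fun htz ↦ ?_⟩⟩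
      rcases hdisj z hzp (htz ▸ ht) with h | h
      exacts [hzu h, hez h.symm]
    · exact ⟨p, fun t ht ↦ ⟨.inl ht, fun htz ↦ hzp (htz ▸ ht)⟩⟩
  refine ⟨r.append w, fun t ht ↦ ?_⟩
  rcases (mem_support_append_iff r w).mp ht with ht | ht
  exacts [hr t ht, hw t ht]

lemma exists_isBlock_superset [Finite V] {S : Set V} (hS : IsBiconnectedSet G S)
    (hcard : 2 ≤ S.ncard) : ∃ B, S ⊆ B ∧ IsBlock G B := by
  obtain ⟨B, hSB, hmax⟩ := Finite.exists_le_maximal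
    (p := fun B : Set V ↦ S ⊆ B ∧ 2 ≤ B.ncard ∧ IsBiconnectedSet G B) ⟨le_rfl, hcard, hS⟩
  exact ⟨B, hSB, hmax.prop.2.1, hmax.prop.2.2, fun B' hBB' hcard' hB' ↦
    le_antisymm (hmax.le_of_ge ⟨hSB.trans hBB', hcard', hB'⟩ hBB') hBB'⟩

end BlockGraph

namespace IsBlockGraph

open Walk

variable {V : Type*} {G : SimpleGraph V}

lemma adj_of_internally_disjoint [Finite V] (hG : IsBlockGraph G) {u y : V}
    {p q : G.Walk u y} (hp : p.IsPath) (hq : q.IsPath) (huy : u ≠ y)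
    (hdisj : ∀ z ∈ p.support, z ∈ q.support → z = u ∨ z = y) : G.Adj u y := by
  set S : Set V := {x | x ∈ p.support} ∪ {x | x ∈ q.support}
  have hu : u ∈ S := .inl p.start_mem_support
  have hy : y ∈ S := .inl p.end_mem_support
  have hcard : 2 ≤ S.ncard := by
    rw [← Set.ncard_pair huy]
    exact Set.ncard_le_ncard (Set.pair_subset hu hy) S.toFinite
  obtain ⟨B, hSB, hB⟩ :=
    exists_isBlock_superset (isBiconnectedSet_support_union hp hq huy hdisj) hcard
  exact hG.2 B hB (hSB hu) (hSB hy) huy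

lemma snd_eq_of_length_eq_dist [Finite V] (hG : IsBlockGraph G) {u v : V}
    {p q : G.Walk u v} (hp : p.length = G.dist u v) (hq : q.length = G.dist u v) (huv : u ≠ v) :
    p.snd = q.snd := by
  classical
  obtain ⟨y, ⟨hyp, hyq, hyu⟩, hmin⟩ := Set.exists_min_image
    {y | y ∈ p.support ∧ y ∈ q.support ∧ y ≠ u} (G.dist u) (Set.toFinite _)
    ⟨v, p.end_mem_support, q.end_mem_support, huv.symm⟩
  set p₁ := p.takeUntil y hyp
  set q₁ := q.takeUntil y hyq
  have hp₁ : p₁.length = G.dist u y := length_eq_dist_of_subwalk hp (p.isSubwalk_takeUntil hyp)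
  have hq₁ : q₁.length = G.dist u y := length_eq_dist_of_subwalk hq (q.isSubwalk_takeUntil hyq)
  -- A common vertex `z ≠ y` of `p₁` and `q₁` would be strictly closer to `u` than `y`.
  have hdisj : ∀ z ∈ p₁.support, z ∈ q₁.support → z = u ∨ z = y := by
    intro z hzp hzq
    by_contra! h
    have hyz := hmin z ⟨p.support_takeUntil_subset_support hyp hzp,
      q.support_takeUntil_subset_support hyq hzq, h.1⟩
    have hsum := dist_add_dist_of_mem_support hp₁ hzp
    have hzy := ((p₁.dropUntil z hzp).reachable.pos_dist_of_ne h.2).ne'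
    omega
  have hadj := hG.adj_of_internally_disjoint (p₁.isPath_of_length_eq_dist hp₁)
    (q₁.isPath_of_length_eq_dist hq₁) hyu.symm hdisj
  have snd_eq : ∀ (r : G.Walk u v) (hr : y ∈ r.support),
      (r.takeUntil y hr).length = G.dist u y → r.snd = y := by
    intro r hr hlen
    rw [dist_eq_one_iff_adj.mpr hadj] at hlen
    rw [Walk.snd, ← getVert_takeUntil hr hlen.ge, ← hlen, getVert_length]
  rw [snd_eq p hyp hp₁, snd_eq q hyq hq₁]

end IsBlockGraph

theorem stmt5_general {V : Type*} [Fintype V] (G : SimpleGraph V) (hbg : IsBlockGraph G)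
    (u v : V) (p q : G.Walk u v)
    (hpl : p.length = G.dist u v) (hql : q.length = G.dist u v) :
    p = q := by
  induction p with
  | nil => exact ((Walk.length_eq_zero_iff.mp (by simpa using hql)).eq_nil).symm
  | @cons a w b h p ih =>
    have hab : a ≠ b := fun hab ↦ by subst hab; simp at hpl
    cases q with
    | nil => exact absurd rfl hab
    | cons h' q =>
      obtain rfl := by simpa using hbg.snd_eq_of_length_eq_dist hpl hql hab
      rw [ih q (length_eq_dist_of_subwalk hpl (p.isSubwalk_cons h))
        (length_eq_dist_of_subwalk hql (q.isSubwalk_cons h'))]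

/-- In a block graph any two vertices are connected by a unique shortest path. -/
theorem stmt5 {V : Type*} [Fintype V] (G : SimpleGraph V) (hbg : IsBlockGraph G)
    (u v : V) (p q : G.Walk u v) (hp : p.IsPath) (hq : q.IsPath)
    (hpl : p.length = G.dist u v) (hql : q.length = G.dist u v) :
    p = q :=
  stmt5_general G hbg u v p q hpl hql
end

section
/- Let G be a connected block graph on n vertices with set of cut vertices V_c(G), and let 2 ≤ k ≤ n. Then SW_k(G) = ∑_{v ∈ V_c(G)} N_k(G∖v) + (k−1)·C(n,k), where N_k(G∖v) is the number of k-element subsets of V(G)∖{v} meeting at least two connected components of G∖v. -/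
open SimpleGraph Finset
open scoped Classical

/-!
In a block graph, a Steiner tree of a nonempty vertex set `S` spans exactly `S` together with
the vertices outside `S` that separate two vertices of `S`. Every connected subgraph containing
`S` must contain these separators. Conversely, `S` and its separators induce a connected
subgraph, because two nonadjacent vertices `a`, `b` of a block graph are always separated by
some vertex: if a common neighbour `x` of `a` and `b` does not separate them, a path from `a`
to `b` avoiding `x` together with `x` is biconnected, hence lies in a block, which is a clique,
and induction along a path from `a` to `b` reduces to this case. So `d(S) = |S| - 1 + #separators(S)`, and summing
over `k`-sets and exchanging the two sums gives the formula, since only cut vertices separate.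
-/

namespace SimpleGraph

variable {V : Type*} {G : SimpleGraph V}

lemma deleteEdges_setOf_mem_eq_deleteIncidenceSet (G : SimpleGraph V) (v : V) :
    G.deleteEdges {e | v ∈ e} = G.deleteIncidenceSet v := by
  ext a b
  rw [deleteEdges_adj, deleteIncidenceSet_adj, Set.mem_ofPred_eq, Sym2.mem_iff]
  grind

lemma Walk.reachable_deleteIncidenceSet {a b v : V} (p : G.Walk a b) (hv : v ∉ p.support) :
    (G.deleteIncidenceSet v).Reachable a b := by
  induction p with
  | nil => rfl
  | cons h p ih =>
    rw [support_cons, List.mem_cons, not_or] at hv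
    have hne : _ ≠ v := fun h => hv.2 (h ▸ p.start_mem_support)
    exact (deleteIncidenceSet_adj.2 ⟨h, Ne.symm hv.1, hne⟩).reachable.trans (ih hv.2)

lemma Walk.notMem_support_of_deleteIncidenceSet {a b v : V}
    (p : (G.deleteIncidenceSet v).Walk a b) (ha : a ≠ v) : v ∉ p.support := by
  induction p with
  | nil => simpa using ha.symm
  | cons h _ ih =>
    rw [deleteIncidenceSet_adj] at h
    simpa [ha.symm] using ih h.2.2

lemma Reachable.exists_isPath_notMem_support {a b v : V}
    (h : (G.deleteIncidenceSet v).Reachable a b) (ha : a ≠ v) :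
    ∃ p : G.Walk a b, p.IsPath ∧ v ∉ p.support := by
  obtain ⟨q⟩ := h
  refine ⟨q.toPath.1.mapLe (G.deleteIncidenceSet_le v), q.toPath.2.mapLe _, ?_⟩
  rw [Walk.support_mapLe_eq_support]
  exact Walk.notMem_support_of_deleteIncidenceSet _ ha

lemma reachable_deleteIncidenceSet_or_of_reachable {a s v : V} (h : G.Reachable s a)
    (hva : v ≠ a) :
    (G.deleteIncidenceSet v).Reachable s a ∨ (G.deleteIncidenceSet a).Reachable s v := by
  obtain ⟨p⟩ := h
  induction p with
  | nil => exact .inl .rfl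
  | @cons s t a hst p ih =>
    rcases eq_or_ne s v with rfl | hsv
    · exact .inr .rfl
    rcases eq_or_ne s a with rfl | hsa
    · exact .inl .rfl
    rcases ih hva with ih | ih
    · rcases eq_or_ne t v with rfl | htv
      · exact .inr (deleteIncidenceSet_adj.2 ⟨hst, hsa, hva⟩).reachable
      · exact .inl ((deleteIncidenceSet_adj.2 ⟨hst, hsv, htv⟩).reachable.trans ih)
    · rcases eq_or_ne t a with rfl | hta
      · exact .inl (deleteIncidenceSet_adj.2 ⟨hst, hsv, hva.symm⟩).reachable
      · exact .inr ((deleteIncidenceSet_adj.2 ⟨hst, hsa, hta⟩).reachable.trans ih)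

lemma Connected.reachable_deleteIncidenceSet_of_not_reachable (hG : G.Connected)
    {a s₁ s₂ v : V} (hsep : ¬ (G.deleteIncidenceSet a).Reachable s₁ s₂) (hva : v ≠ a) :
    (G.deleteIncidenceSet v).Reachable s₁ a ∨ (G.deleteIncidenceSet v).Reachable s₂ a := by
  rcases reachable_deleteIncidenceSet_or_of_reachable (hG s₁ a) hva with h₁ | h₁
  · exact .inl h₁
  rcases reachable_deleteIncidenceSet_or_of_reachable (hG s₂ a) hva with h₂ | h₂
  · exact .inr h₂
  exact absurd (h₁.trans h₂.symm) hsep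

lemma Connected.dist_add_dist_eq_of_not_reachable (hG : G.Connected) {a b v : V}
    (hsep : ¬ (G.deleteIncidenceSet v).Reachable a b) :
    G.dist a v + G.dist v b = G.dist a b := by
  refine le_antisymm ?_ hG.dist_triangle
  obtain ⟨p, -, hp⟩ := hG.exists_path_of_dist a b
  have hv : v ∈ p.support := by
    by_contra hv
    exact hsep (p.reachable_deleteIncidenceSet hv)
  calc G.dist a v + G.dist v b
      ≤ (p.takeUntil v hv).length + (p.dropUntil v hv).length :=
        add_le_add (dist_le _) (dist_le _)
    _ = G.dist a b := by rw [← Walk.length_append, p.take_spec hv, hp]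

lemma isCutVertex_of_not_reachable (hG : G.Connected) {a b v : V}
    (hsep : ¬ (G.deleteIncidenceSet v).Reachable a b) (hva : v ≠ a) (hvb : v ≠ b) :
    IsCutVertex G v := by
  refine ⟨hG, fun hc => hsep ?_⟩
  obtain ⟨p⟩ := hc.preconnected ⟨a, hva.symm⟩ ⟨b, hvb.symm⟩
  rw [← induce_deleteIncidenceSet_of_notMem G (s := {u | u ≠ v}) (x := v) (by simp)] at p
  exact ⟨p.map (Embedding.induce _).toHom⟩

lemma Walk.connected_induce_insert_support {u v x : V} (p : G.Walk u v) (hx : G.Adj u x) :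
    (G.induce (insert x {z | z ∈ p.support})).Connected := by
  rw [Set.insert_eq, Set.union_comm]
  refine connected_induce_union p.connected_induce_support.preconnected ?_
    p.start_mem_support rfl hx
  rw [induce_singleton_eq_top]
  exact preconnected_top

lemma Walk.IsPath.notMem_support_takeUntil_or_dropUntil {a b y w : V} {p : G.Walk a b}
    (hp : p.IsPath) (hy : y ∈ p.support) (hyw : y ≠ w) :
    w ∉ (p.takeUntil y hy).support ∨ w ∉ (p.dropUntil y hy).support := by
  have hnd := hp.support_nodup
  rw [← p.take_spec hy, support_append] at hnd
  by_contra! ⟨h₁, h₂⟩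
  rw [← cons_tail_support, List.mem_cons] at h₂
  exact List.disjoint_of_nodup_append hnd h₁ (h₂.resolve_left hyw.symm)

lemma Walk.IsPath.isBiconnectedSet_insert_support {a b x : V} {r : G.Walk a b}
    (hr : r.IsPath) (hx : x ∉ r.support) (hxa : G.Adj a x) (hxb : G.Adj b x) :
    IsBiconnectedSet G (insert x {y | y ∈ r.support}) := by
  refine ⟨r.connected_induce_insert_support hxa, fun w hw _ => ?_⟩
  rcases hw with rfl | hw
  · rw [Set.insert_sdiff_self_of_notMem (s := {y | y ∈ r.support}) hx]
    exact r.connected_induce_support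
  have hxw : x ≠ w := fun h => hx (h ▸ hw)
  -- every remaining vertex reaches `x` along the part of `r` on its side of `w`
  have patch : ∀ {u y : V} (q : G.Walk u y), G.Adj u x → w ∉ q.support →
      q.support ⊆ r.support → ∃ s ⊆ insert x {y | y ∈ r.support} \ {w},
        ∃ (hxs : x ∈ s) (hys : y ∈ s), (G.induce s).Reachable ⟨x, hxs⟩ ⟨y, hys⟩ := by
    intro u y q hux hwq hqr
    refine ⟨_, ?_, Set.mem_insert _ _, Set.mem_insert_of_mem _ q.end_mem_support,
      (q.connected_induce_insert_support hux).preconnected _ _⟩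
    rintro z (rfl | hz)
    · exact ⟨Set.mem_insert _ _, hxw⟩
    · exact ⟨Set.mem_insert_of_mem _ (hqr hz), fun h => hwq (Set.mem_singleton_iff.1 h ▸ hz)⟩
  refine induce_connected_of_patches x ⟨Set.mem_insert _ _, hxw⟩ fun {y} hy => ?_
  obtain ⟨rfl | hy, hyw⟩ := hy
  · exact ⟨{y}, by simpa using hxw, rfl, rfl, .rfl⟩
  rcases hr.notMem_support_takeUntil_or_dropUntil hy (by simpa using hyw) with h | h
  · exact patch _ hxa h (r.support_takeUntil_subset_support hy)
  · refine patch (r.dropUntil y hy).reverse hxb (by simpa using h) ?_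
    rw [support_reverse]
    exact fun z hz => r.support_dropUntil_subset_support hy (List.mem_reverse.1 hz)

lemma Subgraph.ncard_edgeSet_coe (H : G.Subgraph) : H.coe.edgeSet.ncard = H.edgeSet.ncard := by
  rw [← H.image_coe_edgeSet_coe, Set.ncard_image_of_injective _
    (Sym2.map.injective Subtype.val_injective)]

lemma Subgraph.Connected.ncard_verts_le {H : G.Subgraph} (hH : H.Connected) :
    H.verts.ncard ≤ H.edgeSet.ncard + 1 := by
  have := hH.coe.card_vert_le_card_edgeSet_add_one
  rwa [← Nat.card_coe_set_eq, ← H.ncard_edgeSet_coe, ← Nat.card_coe_set_eq]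

lemma Subgraph.Connected.exists_connected_verts_eq [Finite V] {H : G.Subgraph}
    (hH : H.Connected) :
    ∃ K : G.Subgraph,
      K.Connected ∧ K.verts = H.verts ∧ K.edgeSet.ncard + 1 = H.verts.ncard := by
  obtain ⟨T, hTH, hT⟩ := hH.coe.exists_isTree_le
  refine ⟨Subgraph.coeSubgraph (toSubgraph T hTH),
    (hT.connected.toSubgraph hTH).coeSubgraph _, by simp, ?_⟩
  rw [Subgraph.edgeSet_map, Set.ncard_image_of_injective _
    (Sym2.map.injective Subgraph.hom_injective), ← Nat.card_coe_set_eq,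
    ← Nat.card_coe_set_eq]
  exact ((isTree_iff_connected_and_card).1 hT).2

-- `G.deleteIncidenceSet v` is `G - v` with `v` kept as an isolated vertex, so for `v ∉ S` the
-- condition says that `S` meets two components of `G - v`.
def separators (G : SimpleGraph V) (S : Set V) : Set V :=
  {v | v ∉ S ∧ ∃ a ∈ S, ∃ b ∈ S, ¬ (G.deleteIncidenceSet v).Reachable a b}

lemma Subgraph.Connected.separators_subset_verts {H : G.Subgraph} (hH : H.Connected)
    {S : Set V} (hS : S ⊆ H.verts) : G.separators S ⊆ H.verts := by
  rintro v ⟨-, a, ha, b, hb, hsep⟩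
  by_contra hv
  obtain ⟨p⟩ := hH.preconnected ⟨a, hS ha⟩ ⟨b, hS hb⟩
  refine hsep ((p.map H.hom).reachable_deleteIncidenceSet ?_)
  rw [Walk.support_map, List.mem_map]
  rintro ⟨z, -, rfl⟩
  exact hv z.2

lemma Connected.separators_subset_isCutVertex (hG : G.Connected) (S : Set V) :
    G.separators S ⊆ {v | IsCutVertex G v} := by
  rintro v ⟨hvS, a, ha, b, hb, hsep⟩
  exact isCutVertex_of_not_reachable hG hsep (ne_of_mem_of_not_mem ha hvS).symm
    (ne_of_mem_of_not_mem hb hvS).symm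

lemma Connected.exists_reachable_of_mem_union_separators (hG : G.Connected) {S : Set V}
    {a v : V} (ha : a ∈ S ∪ G.separators S) (hva : v ≠ a) :
    ∃ s ∈ S, (G.deleteIncidenceSet v).Reachable a s := by
  rcases ha with ha | ⟨-, s₁, hs₁, s₂, hs₂, hsep⟩
  · exact ⟨a, ha, .rfl⟩
  · rcases hG.reachable_deleteIncidenceSet_of_not_reachable hsep hva with h | h
    · exact ⟨s₁, hs₁, h.symm⟩
    · exact ⟨s₂, hs₂, h.symm⟩

lemma Connected.mem_union_separators_of_not_reachable (hG : G.Connected) {S : Set V}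
    {a b v : V} (ha : a ∈ S ∪ G.separators S) (hb : b ∈ S ∪ G.separators S)
    (hva : v ≠ a) (hvb : v ≠ b) (hsep : ¬ (G.deleteIncidenceSet v).Reachable a b) :
    v ∈ S ∪ G.separators S := by
  obtain ⟨s₁, hs₁, h₁⟩ := hG.exists_reachable_of_mem_union_separators ha hva
  obtain ⟨s₂, hs₂, h₂⟩ := hG.exists_reachable_of_mem_union_separators hb hvb
  by_cases hvS : v ∈ S
  · exact .inl hvS
  · exact .inr ⟨hvS, s₁, hs₁, s₂, hs₂, fun h => hsep (h₁.trans (h.trans h₂.symm))⟩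

end SimpleGraph

lemma steinerDist_eq_of_forall_subset_verts {V : Type*} [Finite V] {G : SimpleGraph V}
    {S W : Set V} (hSW : S ⊆ W) (hW : (G.induce W).Connected)
    (hmin : ∀ H : G.Subgraph, H.Connected → S ⊆ H.verts → W ⊆ H.verts) :
    steinerDist G S = W.ncard - 1 := by
  obtain ⟨K, hK, hKW, hKe⟩ := (connected_induce_iff.1 hW).exists_connected_verts_eq
  rw [Subgraph.induce_verts] at hKW hKe
  refine le_antisymm (Nat.sInf_le ⟨K, hK, hKW ▸ hSW, by omega⟩)
    (le_csInf ⟨_, K, hK, hKW ▸ hSW, rfl⟩ ?_)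
  rintro _ ⟨H, hH, hSH, rfl⟩
  have := Set.ncard_le_ncard (hmin H hH hSH)
  have := hH.ncard_verts_le
  omega

namespace IsBlockGraph

variable {V : Type*} [Finite V] {G : SimpleGraph V}

lemma isClique_of_isBiconnectedSet_s8 (hbg : IsBlockGraph G) {B : Set V} (h2 : 2 ≤ B.ncard)
    (hB : IsBiconnectedSet G B) : G.IsClique B := by
  obtain ⟨F, hBF, hF⟩ :=
    Finite.exists_le_maximal (p := fun F => B ⊆ F ∧ IsBiconnectedSet G F) ⟨le_rfl, hB⟩
  have hblock : IsBlock G F :=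
    ⟨h2.trans (Set.ncard_le_ncard hBF), hF.prop.2, fun B' hFB' _ hB' =>
      (hF.eq_of_le ⟨hBF.trans hFB', hB'⟩ hFB').symm⟩
  exact (hbg.2 F hblock).subset hBF

lemma adj_of_reachable_deleteIncidenceSet (hbg : IsBlockGraph G) {a b x : V} (hab : a ≠ b)
    (hxa : G.Adj a x) (hxb : G.Adj b x) (h : (G.deleteIncidenceSet x).Reachable a b) :
    G.Adj a b := by
  obtain ⟨r, hr, hxr⟩ := h.exists_isPath_notMem_support hxa.ne
  have hr₂ : 2 ≤ (insert x {y | y ∈ r.support}).ncard :=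
    (Set.one_lt_ncard_iff (Set.toFinite _)).2 ⟨x, a, Set.mem_insert _ _,
      Set.mem_insert_of_mem _ r.start_mem_support, hxa.ne'⟩
  exact hbg.isClique_of_isBiconnectedSet_s8 hr₂ (hr.isBiconnectedSet_insert_support hxr hxa hxb)
    (Set.mem_insert_of_mem _ r.start_mem_support)
    (Set.mem_insert_of_mem _ r.end_mem_support) hab

lemma eq_or_adj_of_forall_reachable (hbg : IsBlockGraph G) {a b : V} (p : G.Walk a b)
    (hp : p.IsPath) (h : ∀ v, v ≠ a → v ≠ b → (G.deleteIncidenceSet v).Reachable a b) :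
    a = b ∨ G.Adj a b := by
  induction p with
  | nil => exact .inl rfl
  | @cons a x b hax q ih =>
    rw [Walk.cons_isPath_iff] at hp
    have hx : ∀ v, v ≠ x → v ≠ b → (G.deleteIncidenceSet v).Reachable x b := by
      intro v hvx hvb
      rcases eq_or_ne v a with rfl | hva
      · exact q.reachable_deleteIncidenceSet hp.2
      · exact (deleteIncidenceSet_adj.2 ⟨hax, hva.symm, hvx.symm⟩).reachable.symm.trans
          (h v hva hvb)
    refine .inr ((ih hp.1 hx).elim (fun hxb => hxb ▸ hax) fun hxb => ?_)
    exact hbg.adj_of_reachable_deleteIncidenceSet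
      (fun hab => hp.2 (hab ▸ q.end_mem_support)) hax hxb.symm (h x hax.ne' hxb.ne)

lemma exists_not_reachable_deleteIncidenceSet (hbg : IsBlockGraph G) {a b : V} (hab : a ≠ b)
    (hnadj : ¬ G.Adj a b) :
    ∃ v, v ≠ a ∧ v ≠ b ∧ ¬ (G.deleteIncidenceSet v).Reachable a b := by
  by_contra! h
  obtain ⟨p, hp⟩ := (hbg.1 a b).exists_isPath
  exact (hbg.eq_or_adj_of_forall_reachable p hp h).elim hab hnadj

lemma induce_union_separators_connected (hbg : IsBlockGraph G) {S : Set V}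
    (hS : S.Nonempty) : (G.induce (S ∪ G.separators S)).Connected := by
  set W := S ∪ G.separators S
  have hG := hbg.1
  suffices key : ∀ n, ∀ a b (ha : a ∈ W) (hb : b ∈ W), G.dist a b = n →
      (G.induce W).Reachable ⟨a, ha⟩ ⟨b, hb⟩ from
    (connected_iff _).2
      ⟨fun a b => key _ a b a.2 b.2 rfl, (hS.mono Set.subset_union_left).to_subtype⟩
  intro n
  induction n using Nat.strong_induction_on with
  | _ n ih =>
  intro a b ha hb hn
  rcases eq_or_ne a b with rfl | hab
  · rfl
  by_cases hadj : G.Adj a b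
  · exact Adj.reachable (G := G.induce W) hadj
  -- a separator `v` of `a` and `b` lies in `W` and strictly between them
  obtain ⟨v, hva, hvb, hsep⟩ := hbg.exists_not_reachable_deleteIncidenceSet hab hadj
  have hv := hG.mem_union_separators_of_not_reachable ha hb hva hvb hsep
  have hdist := hG.dist_add_dist_eq_of_not_reachable hsep
  have hdav := hG.pos_dist_of_ne hva.symm
  have hdvb := hG.pos_dist_of_ne hvb
  exact (ih _ (by omega) a v ha hv rfl).trans (ih _ (by omega) v b hv hb rfl)

lemma steinerDist_eq (hbg : IsBlockGraph G) {S : Set V} (hS : S.Nonempty) :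
    steinerDist G S = S.ncard - 1 + (G.separators S).ncard := by
  rw [steinerDist_eq_of_forall_subset_verts Set.subset_union_left
    (hbg.induce_union_separators_connected hS)
    fun H hH hSH => Set.union_subset hSH (hH.separators_subset_verts hSH),
    Set.ncard_union_eq (Set.disjoint_left.2 fun _ hv hv' => hv'.1 hv)]
  have := hS.ncard_pos
  omega

end IsBlockGraph

theorem stmt8_general {V : Type*} [Fintype V] (G : SimpleGraph V) (hbg : IsBlockGraph G)
    (k : ℕ) (hk : 2 ≤ k) :
    steinerWiener G k =
      (∑ v ∈ Finset.univ.filter (fun v => IsCutVertex G v),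
        {S : Finset V | S.card = k ∧ v ∉ S ∧ ∃ a ∈ S, ∃ b ∈ S,
          ¬ (G.deleteEdges {e | v ∈ e}).Reachable a b}.ncard)
      + (k - 1) * (Fintype.card V).choose k := by
  have hdist : ∀ S ∈ powersetCard k univ, steinerDist G ↑S =
      (k - 1) + #((univ.filter (IsCutVertex G)).bipartiteAbove
        (fun (S : Finset V) v => v ∈ G.separators ↑S) S) := by
    intro S hS
    rw [mem_powersetCard] at hS
    have hne : (↑S : Set V).Nonempty := by rw [coe_nonempty, ← card_pos]; omega
    rw [hbg.steinerDist_eq hne, Set.ncard_coe_finset, hS.2, ← Set.ncard_coe_finset]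
    congr 2
    ext v
    simpa [bipartiteAbove] using fun hv => hbg.1.separators_subset_isCutVertex _ hv
  simp_rw [deleteEdges_setOf_mem_eq_deleteIncidenceSet]
  rw [steinerWiener, sum_congr rfl hdist, sum_add_distrib, sum_const, card_powersetCard,
    card_univ, smul_eq_mul, sum_card_bipartiteAbove_eq_sum_card_bipartiteBelow, add_comm, mul_comm]
  congr 1
  refine sum_congr rfl fun v _ => ?_
  rw [← Set.ncard_coe_finset]
  congr 1
  ext S
  simp [bipartiteBelow, separators]

/-- Vertex decomposition of the Steiner k-Wiener index of a block graph:
SW_k(G) = sum over cut vertices v of N_k(G minus v) + (k-1)*C(n,k), where N_k(G minus v)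
counts the k-subsets of V minus {v} meeting at least two components of G minus v. -/
theorem stmt8 {V : Type*} [Fintype V] (G : SimpleGraph V) (hbg : IsBlockGraph G)
    (k : ℕ) (hk : 2 ≤ k) (hk' : k ≤ Fintype.card V) :
    steinerWiener G k =
      (∑ v ∈ Finset.univ.filter (fun v => IsCutVertex G v),
        {S : Finset V | S.card = k ∧ v ∉ S ∧ ∃ a ∈ S, ∃ b ∈ S,
          ¬ (G.deleteEdges {e | v ∈ e}).Reachable a b}.ncard)
      + (k - 1) * (Fintype.card V).choose k :=
  stmt8_general G hbg k hk
end
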